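/- arXiv:2411.08671 — 5 statements merged into one kernel-verified Lean document; each statement's English description precedes it below -/
import Mathlib

section
/- For k = 1, BPE is optimal: for every string s, bpe(s,1) = OPT(s,1). -/
variable {α : Type*} [DecidableEq α]

/-- Full greedy left-to-right replacement of the pair `ab` by `c`. -/
def replace (a b c : α) : List α → List α
  | [] => []
  | [x] => [x]
  | x :: y :: rest =>
    if x = a ∧ y = b then c :: replace a b c rest
    else x :: replace a b c (y :: rest)

/-- Replacement of every occurrence of the symbol `c` by the pair `ab`. -/
def expand (a b c : α) : List α → List α
  | [] => []
  | x :: rest => if x = c then a :: b :: expand a b c rest else x :: expand a b c rest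

/-- `t` is obtained from `s` by one partial replacement rule (replacing some
non-overlapping occurrences of a pair `ab` by a symbol `c`, invertibly). -/
def PartialStep (s t : List α) : Prop := ∃ a b c : α, expand a b c t = s

/-- `t` is obtained from `s` by one full merge of a pair `ab` into a fresh symbol `c`. -/
def FullStep (s t : List α) : Prop := ∃ a b c : α, c ∉ s ∧ t = replace a b c s

/-- A greedy (BPE) step: a full merge minimizing the resulting length. -/
def GreedyStep (s t : List α) : Prop :=
  FullStep s t ∧ ∀ u : List α, FullStep s u → t.length ≤ u.length

/-- `t` is obtained from `s` by a partial merge sequence of length `k`. -/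
def PartialReach : ℕ → List α → List α → Prop
  | 0, s, t => t = s
  | k+1, s, t => ∃ u, PartialStep s u ∧ PartialReach k u t

/-- `t` is obtained from `s` by a full merge sequence of length `k`. -/
def FullReach : ℕ → List α → List α → Prop
  | 0, s, t => t = s
  | k+1, s, t => ∃ u, FullStep s u ∧ FullReach k u t

/-- `t` is obtained from `s` by a run of BPE with `k` greedy merge rounds. -/
def GreedyReach : ℕ → List α → List α → Prop
  | 0, s, t => t = s
  | k+1, s, t => ∃ u, GreedyStep s u ∧ GreedyReach k u t

/-- Optimal utility of partial merge sequences of length `k` (the OPE optimum). -/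
noncomputable def OPT (s : List α) (k : ℕ) : ℕ :=
  sSup {u : ℕ | ∃ t : List α, PartialReach k s t ∧ u = s.length - t.length}

/-- Optimal utility of full merge sequences of length `k` (the OMS optimum). -/
noncomputable def OPTm (s : List α) (k : ℕ) : ℕ :=
  sSup {u : ℕ | ∃ t : List α, FullReach k s t ∧ u = s.length - t.length}

/-- A pair packing: non-overlapping indices at which a common pair occurs in `s`
(0-based indices). -/
def IsPairPacking (s : List α) (P : Finset ℕ) : Prop :=
  (∀ i ∈ P, i + 1 < s.length) ∧
  (∀ i ∈ P, ∀ j ∈ P, i ≠ j → 2 ≤ Nat.dist i j) ∧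
  ∃ a b : α, ∀ i ∈ P, s[i]? = some a ∧ s[i+1]? = some b

/-- A `k`-packing: a disjoint union of `k` pair packings. -/
def IsKPacking (s : List α) (k : ℕ) (P : Fin k → Finset ℕ) : Prop :=
  (∀ i, IsPairPacking s (P i)) ∧ ∀ i j, i ≠ j → Disjoint (P i) (P j)

/-- `Pk s k`: maximum size of a `k`-packing of `s`. -/
noncomputable def Pk (s : List α) (k : ℕ) : ℕ :=
  sSup {n : ℕ | ∃ P : Fin k → Finset ℕ, IsKPacking s k P ∧ n = ∑ i, (P i).card}

/-- Number of (possibly overlapping) occurrences of the pair `ab` in `s`. -/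
def freq (s : List α) (a b : α) : ℕ :=
  ((Finset.range s.length).filter (fun i => s[i]? = some a ∧ s[i+1]? = some b)).card

/-- `Fk s k`: total number of occurrences of the `k` most frequent pairs in `s`. -/
noncomputable def Fk (s : List α) (k : ℕ) : ℕ :=
  sSup {n : ℕ | ∃ Q : Finset (α × α), Q.card ≤ k ∧ n = ∑ p ∈ Q, freq s p.1 p.2}

/-! If a partial replacement turns `s` into `m`, then `s = expand a b c₀ m`, and the greedy merge
of `ab` in `expand a b c₀ m` is no longer than `m`: each expanded `c₀` merges back, and prepending
a symbol lengthens a greedy merge by at most one. A full merge is itself a partial replacement, so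
the greedy step attains `OPT(s,1)`. -/

theorem length_replace_cons_bounds (a b c x : α) (l : List α) :
    (replace a b c l).length ≤ (replace a b c (x :: l)).length ∧
      (replace a b c (x :: l)).length ≤ (replace a b c l).length + 1 := by
  induction l generalizing x with
  | nil => simp [replace]
  | cons y rest ih =>
    by_cases hxy : x = a ∧ y = b
    · have := ih y
      simp only [replace, if_pos hxy, List.length_cons]
      omega
    · simp [replace, if_neg hxy]

theorem length_replace_expand_le (a b c c₀ : α) (m : List α) :
    (replace a b c (expand a b c₀ m)).length ≤ m.length := by
  induction m with
  | nil => simp [expand, replace]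
  | cons x m ih =>
    by_cases hx : x = c₀
    · simpa [expand, hx, replace] using ih
    · have := (length_replace_cons_bounds a b c x (expand a b c₀ m)).2
      simp only [expand, if_neg hx, List.length_cons]
      omega

theorem expand_replace_of_not_mem (a b c : α) (s : List α) (hc : c ∉ s) :
    expand a b c (replace a b c s) = s := by
  induction s using replace.induct a b with
  | case1 => simp [replace, expand]
  | case2 x => simp_all [replace, expand, eq_comm]
  | case3 x y rest hxy ih =>
    obtain ⟨rfl, rfl⟩ := hxy
    simp_all [replace, expand]
  | case4 x y rest hxy ih =>
    simp only [List.mem_cons, not_or] at hc ih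
    simp [replace, if_neg hxy, expand, Ne.symm hc.1, ih hc.2]

theorem FullStep.partialStep {s t : List α} (h : FullStep s t) : PartialStep s t := by
  obtain ⟨a, b, c, hc, rfl⟩ := h
  exact ⟨a, b, c, expand_replace_of_not_mem a b c s hc⟩

theorem PartialStep.exists_fullStep_length_le {s u : List α} {c : α} (hc : c ∉ s)
    (h : PartialStep s u) : ∃ v, FullStep s v ∧ v.length ≤ u.length := by
  obtain ⟨a, b, c₀, rfl⟩ := h
  exact ⟨_, ⟨a, b, c, hc, rfl⟩, length_replace_expand_le a b c c₀ u⟩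

/-- for `k = 1`, BPE is optimal: any run of one greedy full merge
achieves utility `OPT(s,1)`. -/
theorem stmt4 {α : Type*} [DecidableEq α] (s t : List α) (h : GreedyReach 1 s t) :
    s.length - t.length = OPT s 1 := by
  obtain ⟨u, ⟨hfull, hmin⟩, hu⟩ := h
  obtain rfl : t = u := hu
  have ⟨_, _, c, hc, _⟩ := hfull
  have hreach : PartialReach 1 s t := ⟨t, hfull.partialStep, rfl⟩
  refine Eq.symm (IsGreatest.csSup_eq ⟨⟨t, hreach, rfl⟩, ?_⟩)
  rintro _ ⟨v, ⟨w, hw, hv⟩, rfl⟩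
  obtain rfl : v = w := hv
  obtain ⟨x, hx, hxw⟩ := hw.exists_fullStep_length_le hc
  have := hmin x hx
  omega
end

section
/- For every string s of length n and every k, if a partial merge sequence of length k transforms s into s', then |s| − |s'| ≤ P_k(s), the size of an optimal k-packing of s. In particular, OPT(s,k) ≤ P_k(s). -/
variable {α : Type*} [DecidableEq α]

/-!
Undo the merges one at a time. If `s = expand a b c u`, every occurrence of `c` in `u` becomes an
occurrence of `ab` in `s`, and these do not overlap. An occurrence of a pair at index `j` of `u`
reappears in `s` straddling the blocks coming from `u[j]` and `u[j+1]`, at index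
`expandPos c u (j + 1) - 1`; this map is strictly increasing and keeps indices two apart, so a
`k`-packing of `u` is carried to a `k`-packing of `s` avoiding the new `ab` packing, whose size is
`|s| - |u|`. Induction along the merge sequence gives a `k`-packing of `s` of size `≥ |s| - |t|`.
-/

omit [DecidableEq α] in
theorem isPairPacking_image {s : List α} {P : Finset ℕ} {f : ℕ → ℕ} {x y : α}
    (hsep : ∀ i ∈ P, ∀ j ∈ P, i < j → f i + 2 ≤ f j)
    (hpair : ∀ i ∈ P, s[f i]? = some x ∧ s[f i + 1]? = some y) :
    IsPairPacking s (P.image f) := by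
  refine ⟨?_, ?_, x, y, by simpa using hpair⟩
  · simp only [Finset.mem_image, forall_exists_index, and_imp, forall_apply_eq_imp_iff₂]
    intro i hi
    exact (List.getElem?_eq_some_iff.mp (hpair i hi).2).1
  · simp only [Finset.mem_image, forall_exists_index, and_imp, forall_apply_eq_imp_iff₂]
    intro i hi j hj hne
    rcases lt_or_gt_of_ne (ne_of_apply_ne f hne) with h | h
    · have := hsep i hi j hj h; unfold Nat.dist; omega
    · have := hsep j hj i hi h; unfold Nat.dist; omega

omit [DecidableEq α] in
theorem IsKPacking.cons {s : List α} {k : ℕ} {Q : Finset ℕ} {P : Fin k → Finset ℕ}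
    (hQ : IsPairPacking s Q) (hP : IsKPacking s k P) (hdisj : ∀ i, Disjoint Q (P i)) :
    IsKPacking s (k + 1) (Fin.cons Q P) := by
  refine ⟨Fin.cases hQ hP.1, fun i j hij => ?_⟩
  cases i using Fin.cases <;> cases j using Fin.cases
  · exact absurd rfl hij
  · simpa using hdisj _
  · simpa using (hdisj _).symm
  · simpa using hP.2 _ _ (ne_of_apply_ne Fin.succ hij)

omit [DecidableEq α] in
theorem IsKPacking.sum_card_le_length {s : List α} {k : ℕ} {P : Fin k → Finset ℕ}
    (hP : IsKPacking s k P) : ∑ i, (P i).card ≤ s.length := by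
  classical
  rw [← Finset.card_biUnion fun i _ j _ hij => hP.2 i j hij]
  calc (Finset.univ.biUnion P).card ≤ (Finset.range s.length).card := by
        refine Finset.card_le_card fun m hm => ?_
        obtain ⟨i, -, hmi⟩ := Finset.mem_biUnion.mp hm
        exact Finset.mem_range.mpr (Nat.lt_of_succ_lt ((hP.1 i).1 m hmi))
    _ = s.length := Finset.card_range _

section Expand

variable (a b c : α) (u : List α)

theorem length_expand : (expand a b c u).length = u.length + u.count c := by
  induction u with
  | nil => rfl
  | cons x u ih =>
    by_cases hx : x = c <;>
      simp only [expand, hx, ↓reduceIte, List.length_cons, ih, List.count_cons_self, ne_eq,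
        not_false_eq_true, List.count_cons_of_ne] <;> omega

/-- The index in `expand a b c u` at which the block coming from `u[j]` starts. -/
def expandPos (j : ℕ) : ℕ := j + (u.take j).count c

@[simp]
theorem expandPos_zero : expandPos c u 0 = 0 := by simp [expandPos]

theorem expandPos_cons_succ (x : α) (j : ℕ) :
    expandPos c (x :: u) (j + 1) = expandPos c u j + if x = c then 2 else 1 := by
  by_cases hx : x = c <;>
    simp only [expandPos, hx, List.take_succ_cons, List.count_cons_self, ne_eq, not_false_eq_true,
      List.count_cons_of_ne, ↓reduceIte] <;> omega

theorem getElem?_expand_expandPos (j : ℕ) :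
    (expand a b c u)[expandPos c u j]? = u[j]?.map fun x => if x = c then a else x := by
  induction u generalizing j with
  | nil => simp [expand]
  | cons x u ih =>
    cases j with
    | zero => by_cases hx : x = c <;> simp [expand, hx]
    | succ j => by_cases hx : x = c <;> simp [expand, expandPos_cons_succ, hx, ih]

theorem getElem?_expand_expandPos_succ_sub_one (j : ℕ) :
    (expand a b c u)[expandPos c u (j + 1) - 1]? = u[j]?.map fun x => if x = c then b else x := by
  induction u generalizing j with
  | nil => simp [expand, expandPos]
  | cons x u ih =>
    cases j with
    | zero => by_cases hx : x = c <;> simp [expand, expandPos_cons_succ, hx]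
    | succ j =>
      have : 1 ≤ expandPos c u (j + 1) := Nat.le_add_right_of_le j.succ_pos
      by_cases hx : x = c
      · rw [expandPos_cons_succ, if_pos hx, show expandPos c u (j + 1) + 2 - 1 =
          expandPos c u (j + 1) - 1 + 2 by omega]
        simp [expand, hx, ih]
      · rw [expandPos_cons_succ, if_neg hx, show expandPos c u (j + 1) + 1 - 1 =
          expandPos c u (j + 1) - 1 + 1 by omega]
        simp [expand, hx, ih]

theorem expandPos_succ (j : ℕ) :
    expandPos c u (j + 1) = expandPos c u j + if u[j]? = some c then 2 else 1 := by
  induction u generalizing j with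
  | nil => simp [expandPos]
  | cons x u ih =>
    cases j with
    | zero => simp [expandPos_cons_succ]
    | succ j => simp only [expandPos_cons_succ, ih, List.getElem?_cons_succ]; omega

theorem expandPos_add_le (j d : ℕ) : expandPos c u j + d ≤ expandPos c u (j + d) := by
  induction d with
  | zero => rfl
  | succ d ih =>
    have := expandPos_succ c u (j + d)
    rw [← Nat.add_assoc j]
    split at this <;> omega

theorem le_expandPos (j : ℕ) : j ≤ expandPos c u j := Nat.le_add_right _ _

theorem expandPos_strictMono : StrictMono (expandPos c u) :=
  strictMono_nat_of_lt_succ fun j => expandPos_add_le c u j 1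

theorem expandPos_succ_sub_one_strictMono : StrictMono fun j => expandPos c u (j + 1) - 1 :=
  strictMono_nat_of_lt_succ fun j => by
    have := expandPos_add_le c u (j + 1) 1
    have := le_expandPos c u (j + 1)
    omega

theorem expandPos_ne_expandPos_succ_sub_one {i : ℕ} (hi : u[i]? = some c) (j : ℕ) :
    expandPos c u i ≠ expandPos c u (j + 1) - 1 := by
  have hsucc : expandPos c u (i + 1) = expandPos c u i + 2 := by simp [expandPos_succ, hi]
  have := le_expandPos c u (j + 1)
  rcases lt_trichotomy j i with h | rfl | h
  · have : expandPos c u (j + 1) ≤ expandPos c u i := (expandPos_strictMono c u).monotone h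
    omega
  · omega
  · have : expandPos c u (i + 1) < expandPos c u (j + 1) := expandPos_strictMono c u (by omega)
    omega

theorem card_filter_getElem?_eq_count :
    ((Finset.range u.length).filter fun j => u[j]? = some c).card = u.count c := by
  induction u with
  | nil => rfl
  | cons x u ih =>
    rw [Finset.card_filter, List.length_cons, Finset.sum_range_succ', ← Finset.card_filter]
    by_cases hx : x = c <;> simp [hx, ih]

theorem isPairPacking_expand :
    IsPairPacking (expand a b c u)
      (((Finset.range u.length).filter fun j => u[j]? = some c).image (expandPos c u)) := by
  refine isPairPacking_image (x := a) (y := b) ?_ ?_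
  · simp only [Finset.mem_filter]
    intro i ⟨_, hi⟩ j _ hij
    rw [← show expandPos c u (i + 1) = expandPos c u i + 2 by simp [expandPos_succ, hi]]
    exact (expandPos_strictMono c u).monotone hij
  · simp only [Finset.mem_filter]
    intro i ⟨_, hi⟩
    refine ⟨by simp [getElem?_expand_expandPos, hi], ?_⟩
    have hb := getElem?_expand_expandPos_succ_sub_one a b c u i
    rw [show expandPos c u (i + 1) = expandPos c u i + 2 by simp [expandPos_succ, hi]] at hb
    simpa [hi] using hb

end Expand

theorem IsPairPacking.image_expand {u : List α} {P : Finset ℕ} (hP : IsPairPacking u P)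
    (a b c : α) :
    IsPairPacking (expand a b c u) (P.image fun j => expandPos c u (j + 1) - 1) := by
  obtain ⟨-, hsep, x, y, hxy⟩ := hP
  refine isPairPacking_image (x := if x = c then b else x) (y := if y = c then a else y) ?_ ?_
  · intro i hi j hj hij
    have hdist := hsep i hi j hj hij.ne
    have hadd := expandPos_add_le c u (i + 1) (j - i)
    have := le_expandPos c u (i + 1)
    unfold Nat.dist at hdist
    rw [show i + 1 + (j - i) = j + 1 by omega] at hadd
    omega
  · intro i hi
    have := le_expandPos c u (i + 1)
    rw [Nat.sub_add_cancel (by omega)]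
    simp [getElem?_expand_expandPos, getElem?_expand_expandPos_succ_sub_one, (hxy i hi).1,
      (hxy i hi).2]

theorem IsKPacking.exists_expand {u : List α} {k : ℕ} {P : Fin k → Finset ℕ}
    (hP : IsKPacking u k P) (a b c : α) :
    ∃ P' : Fin (k + 1) → Finset ℕ, IsKPacking (expand a b c u) (k + 1) P' ∧
      ∑ i, (P' i).card = u.count c + ∑ i, (P i).card := by
  have hinj := (expandPos_succ_sub_one_strictMono c u).injective
  refine ⟨Fin.cons _ fun i => (P i).image _, IsKPacking.cons (isPairPacking_expand a b c u)
    ⟨fun i => (hP.1 i).image_expand a b c, fun i j hij => (Finset.disjoint_image hinj).mpr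
      (hP.2 i j hij)⟩ fun i => ?_, ?_⟩
  · simp only [Finset.disjoint_left, Finset.mem_image, Finset.mem_filter]
    rintro _ ⟨j, ⟨-, hj⟩, rfl⟩ ⟨j', -, hj'⟩
    exact expandPos_ne_expandPos_succ_sub_one c u hj j' hj'.symm
  · rw [Fin.sum_univ_succ]
    simp only [Fin.cons_zero, Fin.cons_succ, Finset.card_image_of_injective _ hinj,
      Finset.card_image_of_injective _ (expandPos_strictMono c u).injective,
      card_filter_getElem?_eq_count]

theorem PartialReach.exists_isKPacking :
    ∀ {k : ℕ} {s t : List α}, PartialReach k s t →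
      ∃ P : Fin k → Finset ℕ, IsKPacking s k P ∧ s.length - t.length ≤ ∑ i, (P i).card
  | 0, s, _, rfl => ⟨Fin.elim0, ⟨fun i => i.elim0, fun i => i.elim0⟩, by simp⟩
  | _ + 1, _, _, ⟨u, ⟨a, b, c, rfl⟩, hut⟩ => by
    obtain ⟨P, hP, hle⟩ := hut.exists_isKPacking
    obtain ⟨P', hP', hsum⟩ := hP.exists_expand a b c
    refine ⟨P', hP', ?_⟩
    rw [length_expand]
    omega

/-- the utility of any partial merge sequence of length `k` is at most
`P_k(s)`; in particular `OPT(s,k) ≤ P_k(s)`. -/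
theorem stmt5 {α : Type*} [DecidableEq α] (s : List α) (k : ℕ) :
    (∀ t : List α, PartialReach k s t → s.length - t.length ≤ Pk s k) ∧
    OPT s k ≤ Pk s k := by
  have hbdd : BddAbove {n | ∃ P : Fin k → Finset ℕ, IsKPacking s k P ∧ n = ∑ i, (P i).card} :=
    ⟨s.length, by rintro _ ⟨P, hP, rfl⟩; exact hP.sum_card_le_length⟩
  have hutility : ∀ t : List α, PartialReach k s t → s.length - t.length ≤ Pk s k := by
    intro t ht
    obtain ⟨P, hP, hle⟩ := ht.exists_isKPacking
    exact hle.trans (le_csSup hbdd ⟨P, hP, rfl⟩)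
  exact ⟨hutility, csSup_le' fun _ ⟨t, ht, hu⟩ => hu ▸ hutility t ht⟩
end

section
/- For every string s and every k ≥ 0, the utility of BPE with k merge rounds is at least one third of the optimal k-packing: bpe(s,k) ≥ P_k(s)/3. -/
variable {α : Type*} [DecidableEq α]

/-!
One BPE round merges the greedy left-to-right matches `S` of some pair `ab` and shortens the
string by `#S`. In a `(k+1)`-packing of `s`, an element whose pair does not overlap a merged
occurrence survives, at a shifted index, as the same pair of the merged string `u`; so the
untouched elements of any `k` of the packings form a `k`-packing of `u`. Touched positions lie in
`S ∪ (S + 1) ∪ (S - 1)`. If some packing meets `S`, it is a packing of `ab`, hence entirely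
touched, and we drop it: the loss is at most `3 #S`. Otherwise the touched elements lie in
`(S + 1) ∪ (S - 1)`, and we drop an arbitrary packing, which by the greedy choice has at most
`#S` elements. Hence `P_{k+1}(s) ≤ 3 #S + P_k(u)`, and the theorem follows by induction on `k`.
-/

open Finset

theorem sum_card_le_card_of_pairwise_disjoint {ι β : Type*} [Fintype ι] [DecidableEq β]
    {F : ι → Finset β} {T : Finset β} (hF : ∀ i j, i ≠ j → Disjoint (F i) (F j))
    (hT : ∀ i, F i ⊆ T) : ∑ i, #(F i) ≤ #T := by
  rw [← card_biUnion fun i _ j _ h => hF i j h]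
  exact card_le_card (biUnion_subset.2 fun i _ => hT i)

section Packing

omit [DecidableEq α]

theorem IsPairPacking.mono {l : List α} {P Q : Finset ℕ} (hP : IsPairPacking l P)
    (hQ : Q ⊆ P) : IsPairPacking l Q := by
  obtain ⟨hlt, hdist, a, b, hocc⟩ := hP
  exact ⟨fun i hi => hlt i (hQ hi), fun i hi j hj => hdist i (hQ hi) j (hQ hj),
    a, b, fun i hi => hocc i (hQ hi)⟩

theorem IsKPacking.mono {l : List α} {k : ℕ} {P Q : Fin k → Finset ℕ} (hP : IsKPacking l k P)
    (hQ : ∀ i, Q i ⊆ P i) : IsKPacking l k Q :=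
  ⟨fun i => (hP.1 i).mono (hQ i), fun i j hij => (hP.2 i j hij).mono (hQ i) (hQ j)⟩

theorem IsKPacking.comp {l : List α} {k m : ℕ} {P : Fin m → Finset ℕ} (hP : IsKPacking l m P)
    {e : Fin k → Fin m} (he : Function.Injective e) : IsKPacking l k (P ∘ e) :=
  ⟨fun i => hP.1 (e i), fun i j hij => hP.2 (e i) (e j) (he.ne hij)⟩

theorem sum_card_le_Pk {l : List α} {k : ℕ} {P : Fin k → Finset ℕ} (hP : IsKPacking l k P) :
    ∑ i, #(P i) ≤ Pk l k := by
  refine le_csSup ⟨l.length, ?_⟩ ⟨P, hP, rfl⟩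
  rintro n ⟨Q, hQ, rfl⟩
  simpa using sum_card_le_card_of_pairwise_disjoint hQ.2
    (T := range l.length) fun i x hx => mem_range.2 (by have := (hQ.1 i).1 x hx; omega)

theorem Pk_zero (l : List α) : Pk l 0 = 0 :=
  Nat.eq_zero_of_le_zero (csSup_le' (by rintro n ⟨P, -, rfl⟩; simp))

end Packing

def replaceStarts (a b : α) : List α → Finset ℕ
  | [] => ∅
  | [_] => ∅
  | x :: y :: rest =>
    if x = a ∧ y = b then insert 0 ((replaceStarts a b rest).image (· + 2))
    else (replaceStarts a b (y :: rest)).image (· + 1)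

theorem length_replace_add_card_replaceStarts (a b c : α) (l : List α) :
    (replace a b c l).length + #(replaceStarts a b l) = l.length := by
  induction l using replaceStarts.induct a b with
  | case1 | case2 => simp [replace, replaceStarts]
  | case3 x y rest h ih =>
    simp only [replace, replaceStarts, if_pos h, List.length_cons]
    rw [card_insert_of_notMem (by simp), card_image_of_injective _ (add_left_injective 2)]
    omega
  | case4 x y rest h ih =>
    simp only [replace, replaceStarts, if_neg h, List.length_cons] at ih ⊢
    rw [card_image_of_injective _ (add_left_injective 1)]
    omega

theorem getElem?_of_mem_replaceStarts {a b : α} {l : List α} {p : ℕ}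
    (hp : p ∈ replaceStarts a b l) : l[p]? = some a ∧ l[p + 1]? = some b := by
  induction l using replaceStarts.induct a b generalizing p with
  | case1 | case2 => simp [replaceStarts] at hp
  | case3 x y rest h ih =>
    obtain ⟨rfl, rfl⟩ := h
    simp only [replaceStarts, and_self, if_true, mem_insert, mem_image] at hp
    rcases hp with rfl | ⟨q, hq, rfl⟩
    · simp
    · simpa using ih hq
  | case4 x y rest h ih =>
    simp only [replaceStarts, if_neg h, mem_image] at hp
    obtain ⟨q, hq, rfl⟩ := hp
    simpa using ih hq

theorem mem_replaceStarts_or_of_getElem? {a b : α} {l : List α} {i : ℕ}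
    (ha : l[i]? = some a) (hb : l[i + 1]? = some b) :
    i ∈ replaceStarts a b l ∨ ∃ p ∈ replaceStarts a b l, p + 1 = i := by
  induction l using replaceStarts.induct a b generalizing i with
  | case1 => simp at ha
  | case2 x => rcases i with _ | i <;> simp at hb
  | case3 x y rest h ih =>
    simp only [replaceStarts, if_pos h, mem_insert, mem_image]
    match i, ha, hb with
    | 0, _, _ => exact Or.inl (Or.inl rfl)
    | 1, _, _ => exact Or.inr ⟨0, Or.inl rfl, rfl⟩
    | j + 2, ha, hb =>
      rcases ih ha hb with hj | ⟨p, hp, rfl⟩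
      · exact Or.inl (Or.inr ⟨j, hj, rfl⟩)
      · exact Or.inr ⟨p + 2, Or.inr ⟨p, hp, rfl⟩, by omega⟩
  | case4 x y rest h ih =>
    simp only [replaceStarts, if_neg h, mem_image]
    rcases i with _ | j
    · simp_all
    · rcases ih ha hb with hj | ⟨p, hp, rfl⟩
      · exact Or.inl ⟨j, hj, rfl⟩
      · exact Or.inr ⟨p + 1, ⟨p, hp, rfl⟩, by omega⟩

/-- For `S = replaceStarts a b l`, the index in `replace a b c l` of the symbol at position `i` of
`l`, provided that this symbol is not part of a merged occurrence. -/
def mergedIndex (S : Finset ℕ) : ℕ → ℕ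
  | 0 => 0
  | i + 1 => mergedIndex S i + if i ∈ S then 0 else 1

theorem mergedIndex_succ (S : Finset ℕ) (i : ℕ) :
    mergedIndex S (i + 1) = mergedIndex S i + if i ∈ S then 0 else 1 := rfl

theorem mergedIndex_empty (i : ℕ) : mergedIndex ∅ i = i := by
  induction i with
  | zero => rfl
  | succ i ih => simp [mergedIndex_succ, ih]

theorem mergedIndex_monotone (S : Finset ℕ) : Monotone (mergedIndex S) :=
  monotone_nat_of_le_succ fun i => by simp [mergedIndex_succ]

theorem mergedIndex_succ_of_notMem {S : Finset ℕ} {i : ℕ} (hi : i ∉ S) :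
    mergedIndex S (i + 1) = mergedIndex S i + 1 := by
  simp [mergedIndex, hi]

theorem mergedIndex_lt_mergedIndex {S : Finset ℕ} {i j : ℕ} (hi : i ∉ S) (hij : i < j) :
    mergedIndex S i < mergedIndex S j :=
  calc mergedIndex S i < mergedIndex S (i + 1) := by rw [mergedIndex_succ_of_notMem hi]; omega
    _ ≤ mergedIndex S j := mergedIndex_monotone S hij

theorem mergedIndex_add_two_le {S : Finset ℕ} {i j : ℕ} (hi : i ∉ S) (hi' : i + 1 ∉ S)
    (hij : i + 2 ≤ j) : mergedIndex S i + 2 ≤ mergedIndex S j :=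
  calc mergedIndex S i + 2 = mergedIndex S (i + 2) := by
        rw [mergedIndex_succ_of_notMem hi', mergedIndex_succ_of_notMem hi]
    _ ≤ mergedIndex S j := mergedIndex_monotone S hij

theorem mergedIndex_image_add_one (S : Finset ℕ) (j : ℕ) :
    mergedIndex (S.image (· + 1)) (j + 1) = mergedIndex S j + 1 := by
  induction j with
  | zero => simp [mergedIndex]
  | succ j ih =>
    simp only [mergedIndex_succ _ (j + 1), ih, mergedIndex_succ S j]
    simp only [mem_image, Nat.add_right_cancel_iff, exists_eq_right]
    omega

theorem mergedIndex_insert_zero_image_add_two (S : Finset ℕ) (j : ℕ) :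
    mergedIndex (insert 0 (S.image (· + 2))) (j + 2) = mergedIndex S j + 1 := by
  induction j with
  | zero => simp [mergedIndex]
  | succ j ih =>
    rw [show j + 1 + 2 = j + 2 + 1 from rfl]
    simp only [mergedIndex_succ _ (j + 2), ih, mergedIndex_succ S j]
    simp only [mem_insert, Nat.add_eq_zero_iff, OfNat.ofNat_ne_zero, and_false, mem_image,
      Nat.add_right_cancel_iff, exists_eq_right, false_or]
    omega

theorem getElem?_replace_mergedIndex (a b c : α) (l : List α) {i : ℕ}
    (hi : i ∉ replaceStarts a b l) (hi' : ∀ p ∈ replaceStarts a b l, p + 1 ≠ i) :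
    (replace a b c l)[mergedIndex (replaceStarts a b l) i]? = l[i]? := by
  induction l using replaceStarts.induct a b generalizing i with
  | case1 | case2 => simp [replace, replaceStarts, mergedIndex_empty]
  | case3 x y rest h ih =>
    simp only [replaceStarts, if_pos h, mem_insert, mem_image] at hi hi' ⊢
    simp only [replace, if_pos h]
    match i, hi, hi' with
    | 0, hi, _ => exact absurd (Or.inl rfl) hi
    | 1, _, hi' => exact absurd rfl (hi' 0 (Or.inl rfl))
    | j + 2, hi, hi' =>
      rw [mergedIndex_insert_zero_image_add_two]
      exact ih (fun hj => hi (Or.inr ⟨j, hj, rfl⟩))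
        (fun p hp hpj => hi' (p + 2) (Or.inr ⟨p, hp, rfl⟩) (by omega))
  | case4 x y rest h ih =>
    simp only [replaceStarts, if_neg h, mem_image] at hi hi' ⊢
    simp only [replace, if_neg h]
    rcases i with _ | j
    · simp [mergedIndex]
    · rw [mergedIndex_image_add_one]
      exact ih (fun hj => hi ⟨j, hj, rfl⟩)
        (fun p hp hpj => hi' (p + 1) ⟨p, hp, rfl⟩ (by omega))

theorem card_le_card_replaceStarts {a b : α} {l : List α} {P : Finset ℕ}
    (hP : IsPairPacking l P) (hocc : ∀ i ∈ P, l[i]? = some a ∧ l[i + 1]? = some b) :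
    #P ≤ #(replaceStarts a b l) := by
  -- each element of `P` is a greedy match or the second symbol of one
  refine card_le_card_of_injOn (fun i => if i ∈ replaceStarts a b l then i else i - 1)
    (fun i hi => ?_) fun i hi j hj hij => ?_
  · rcases mem_replaceStarts_or_of_getElem? (hocc i hi).1 (hocc i hi).2 with hS | ⟨p, hp, rfl⟩
    · simp [hS]
    · by_cases hS : p + 1 ∈ replaceStarts a b l <;> simp [hS, hp]
  · by_contra hne
    have := hP.2.1 i hi j hj hne
    simp only [Nat.dist] at this hij
    split_ifs at hij <;> omega

/-- The positions `x` whose pair `(x, x + 1)` overlaps a merged occurrence starting in `S`. -/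
def touched (S : Finset ℕ) : Finset ℕ := S ∪ S.image (· + 1) ∪ S.image (· - 1)

theorem mem_touched {S : Finset ℕ} {x : ℕ} :
    x ∈ touched S ↔ x ∈ S ∨ x + 1 ∈ S ∨ ∃ p ∈ S, p + 1 = x := by
  simp only [touched, mem_union, mem_image]
  constructor
  · rintro ((hx | hx) | ⟨p, hp, rfl⟩)
    · exact Or.inl hx
    · exact Or.inr (Or.inr hx)
    · rcases p with _ | p
      · exact Or.inl hp
      · exact Or.inr (Or.inl hp)
  · rintro (hx | hx | hx)
    · exact Or.inl (Or.inl hx)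
    · exact Or.inr ⟨x + 1, hx, rfl⟩
    · exact Or.inl (Or.inr hx)

theorem card_touched_le (S : Finset ℕ) : #(touched S) ≤ 3 * #S := by
  have := card_union_le (S ∪ S.image (· + 1)) (S.image (· - 1))
  have := card_union_le S (S.image (· + 1))
  have := card_image_le (s := S) (f := (· + 1))
  have := card_image_le (s := S) (f := (· - 1))
  unfold touched
  omega

theorem card_touched_sdiff_le (S : Finset ℕ) : #(touched S \ S) ≤ 2 * #S := by
  have hsub : touched S \ S ⊆ S.image (· + 1) ∪ S.image (· - 1) := by
    intro x hx
    simp only [touched, mem_sdiff, mem_union] at hx ⊢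
    tauto
  have := card_union_le (S.image (· + 1)) (S.image (· - 1))
  have := card_image_le (s := S) (f := (· + 1))
  have := card_image_le (s := S) (f := (· - 1))
  have := card_le_card hsub
  omega

theorem mergedIndex_strictMonoOn (S : Finset ℕ) : StrictMonoOn (mergedIndex S) {x | x ∉ S} :=
  fun _ hi _ _ hij => mergedIndex_lt_mergedIndex hi hij

theorem two_le_dist_mergedIndex {S : Finset ℕ} {x y : ℕ} (hx : x ∉ touched S)
    (hy : y ∉ touched S) (hxy : 2 ≤ Nat.dist x y) :
    2 ≤ Nat.dist (mergedIndex S x) (mergedIndex S y) := by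
  simp only [mem_touched, not_or] at hx hy
  unfold Nat.dist at hxy ⊢
  rcases lt_or_gt_of_ne (show x ≠ y by rintro rfl; simp at hxy) with h | h
  · have := mergedIndex_add_two_le hx.1 hx.2.1 (by omega : x + 2 ≤ y); omega
  · have := mergedIndex_add_two_le hy.1 hy.2.1 (by omega : y + 2 ≤ x); omega

theorem getElem?_replace_mergedIndex_of_notMem_touched (a b c : α) (l : List α) {x : ℕ}
    (hx : x ∉ touched (replaceStarts a b l)) :
    (replace a b c l)[mergedIndex (replaceStarts a b l) x]? = l[x]? ∧
      (replace a b c l)[mergedIndex (replaceStarts a b l) x + 1]? = l[x + 1]? := by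
  simp only [mem_touched, not_or, not_exists, not_and] at hx
  obtain ⟨hx, hx', hx''⟩ := hx
  refine ⟨getElem?_replace_mergedIndex a b c l hx hx'', ?_⟩
  rw [← mergedIndex_succ_of_notMem hx]
  exact getElem?_replace_mergedIndex a b c l hx' fun p hp h => hx (add_right_cancel h ▸ hp)

theorem IsPairPacking.image_mergedIndex {a b c : α} {l : List α} {P : Finset ℕ}
    (hP : IsPairPacking l P) (hT : Disjoint P (touched (replaceStarts a b l))) :
    IsPairPacking (replace a b c l) (P.image (mergedIndex (replaceStarts a b l))) := by
  obtain ⟨-, hdist, a', b', hocc⟩ := hP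
  have hocc' : ∀ x ∈ P, (replace a b c l)[mergedIndex (replaceStarts a b l) x]? = some a' ∧
      (replace a b c l)[mergedIndex (replaceStarts a b l) x + 1]? = some b' := fun x hx => by
    obtain ⟨h, h'⟩ :=
      getElem?_replace_mergedIndex_of_notMem_touched a b c l (disjoint_left.1 hT hx)
    rw [h, h']
    exact hocc x hx
  refine ⟨forall_mem_image.2 fun x hx => (List.getElem?_eq_some_iff.1 (hocc' x hx).2).1,
    forall_mem_image.2 fun x hx => forall_mem_image.2 fun y hy hne => ?_, a', b',
    forall_mem_image.2 hocc'⟩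
  exact two_le_dist_mergedIndex (disjoint_left.1 hT hx) (disjoint_left.1 hT hy)
    (hdist x hx y hy (by rintro rfl; exact hne rfl))

theorem sum_card_sdiff_touched_le_Pk (a b c : α) {l : List α} {k : ℕ} {P : Fin k → Finset ℕ}
    (hP : IsKPacking l k P) :
    ∑ i, #(P i \ touched (replaceStarts a b l)) ≤ Pk (replace a b c l) k := by
  set S := replaceStarts a b l
  have hinj : Set.InjOn (mergedIndex S) {x | x ∉ touched S} :=
    (mergedIndex_strictMonoOn S).injOn.mono fun x hx hS => hx (mem_touched.2 (Or.inl hS))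
  have hinj' (i) : Set.InjOn (mergedIndex S) (P i \ touched S : Finset ℕ) :=
    hinj.mono fun x hx => (mem_sdiff.1 hx).2
  have hQ : IsKPacking (replace a b c l) k fun i => (P i \ touched S).image (mergedIndex S) := by
    refine ⟨fun i => ((hP.1 i).mono sdiff_subset).image_mergedIndex sdiff_disjoint,
      fun i j hij => disjoint_left.2 ?_⟩
    intro _ hx' hy'
    obtain ⟨x, hx, rfl⟩ := mem_image.1 hx'
    obtain ⟨y, hy, hxy⟩ := mem_image.1 hy'
    obtain rfl := hinj (mem_sdiff.1 hy).2 (mem_sdiff.1 hx).2 hxy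
    exact disjoint_left.1 (hP.2 i j hij) (mem_sdiff.1 hx).1 (mem_sdiff.1 hy).1
  calc ∑ i, #(P i \ touched S) = ∑ i, #((P i \ touched S).image (mergedIndex S)) :=
        sum_congr rfl fun i _ => (card_image_of_injOn (hinj' i)).symm
    _ ≤ Pk (replace a b c l) k := sum_card_le_Pk hQ

theorem FullStep.length_le {s u : List α} (h : FullStep s u) : u.length ≤ s.length := by
  obtain ⟨a, b, c, -, rfl⟩ := h
  have := length_replace_add_card_replaceStarts a b c s
  omega

theorem GreedyReach.length_le :
    ∀ {k : ℕ} {s t : List α}, GreedyReach k s t → t.length ≤ s.length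
  | 0, _, _, h => h ▸ le_rfl
  | _ + 1, _, _, ⟨_, hsu, hut⟩ => hut.length_le.trans hsu.1.length_le

theorem GreedyStep.card_add_length_le {s u : List α} (hg : GreedyStep s u) {P : Finset ℕ}
    (hP : IsPairPacking s P) : #P + u.length ≤ s.length := by
  obtain ⟨⟨-, -, c, hc, -⟩, hmin⟩ := hg
  obtain ⟨a, b, hocc⟩ := hP.2.2
  have := card_le_card_replaceStarts hP hocc
  have := length_replace_add_card_replaceStarts a b c s
  have := hmin _ ⟨a, b, c, hc, rfl⟩
  omega

theorem IsPairPacking.subset_touched {a b : α} {l : List α} {P : Finset ℕ}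
    (hP : IsPairPacking l P) {x : ℕ} (hx : x ∈ P) (hxS : x ∈ replaceStarts a b l) :
    P ⊆ touched (replaceStarts a b l) := by
  obtain ⟨-, -, a', b', hocc⟩ := hP
  obtain ⟨ha, hb⟩ := getElem?_of_mem_replaceStarts hxS
  rw [(hocc x hx).1, Option.some_inj] at ha
  rw [(hocc x hx).2, Option.some_inj] at hb
  subst ha hb
  intro y hy
  rcases mem_replaceStarts_or_of_getElem? (hocc y hy).1 (hocc y hy).2 with h | h
  · exact mem_touched.2 (Or.inl h)
  · exact mem_touched.2 (Or.inr (Or.inr h))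

theorem exists_card_sdiff_add_sum_card_inter_touched_le {a b : α} {s : List α} {k : ℕ}
    {P : Fin (k + 1) → Finset ℕ} (hP : IsKPacking s (k + 1) P)
    (hmax : ∀ Q, IsPairPacking s Q → #Q ≤ #(replaceStarts a b s)) :
    ∃ i₀, #(P i₀ \ touched (replaceStarts a b s)) +
      ∑ i, #(P i ∩ touched (replaceStarts a b s)) ≤ 3 * #(replaceStarts a b s) := by
  set S := replaceStarts a b s
  have hdisj (i j) (hij : i ≠ j) : Disjoint (P i ∩ touched S) (P j ∩ touched S) :=
    (hP.2 i j hij).mono inter_subset_left inter_subset_left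
  by_cases hS : ∃ i₀, ¬Disjoint (P i₀) S
  · obtain ⟨i₀, hi₀⟩ := hS
    obtain ⟨x, hx, hxS⟩ := not_disjoint_iff.1 hi₀
    refine ⟨i₀, ?_⟩
    rw [sdiff_eq_empty_iff_subset.2 ((hP.1 i₀).subset_touched hx hxS), card_empty, zero_add]
    exact (sum_card_le_card_of_pairwise_disjoint hdisj fun i => inter_subset_right).trans
      (card_touched_le S)
  · push Not at hS
    refine ⟨0, ?_⟩
    have hkept : #(P 0 \ touched S) ≤ #S := (card_le_card sdiff_subset).trans (hmax _ (hP.1 0))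
    have hlost : ∑ i, #(P i ∩ touched S) ≤ #(touched S \ S) :=
      sum_card_le_card_of_pairwise_disjoint hdisj fun i x hx =>
        mem_sdiff.2 ⟨(mem_inter.1 hx).2, disjoint_left.1 (hS i) (mem_inter.1 hx).1⟩
    have := card_touched_sdiff_le S
    omega

theorem sum_card_le_three_mul_add_Pk {a b : α} (c : α) {s : List α} {k : ℕ}
    {P : Fin (k + 1) → Finset ℕ} (hP : IsKPacking s (k + 1) P)
    (hmax : ∀ Q, IsPairPacking s Q → #Q ≤ #(replaceStarts a b s)) :
    ∑ i, #(P i) ≤ 3 * #(replaceStarts a b s) + Pk (replace a b c s) k := by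
  obtain ⟨i₀, hi₀⟩ := exists_card_sdiff_add_sum_card_inter_touched_le hP hmax
  have hkept :=
    sum_card_sdiff_touched_le_Pk a b c (hP.comp (Fin.succAbove_right_injective (p := i₀)))
  set T := touched (replaceStarts a b s)
  calc ∑ i, #(P i) = ∑ i, #(P i ∩ T) + ∑ i, #(P i \ T) := by
        rw [← sum_add_distrib]
        simp only [card_inter_add_card_sdiff]
    _ = ∑ i, #(P i ∩ T) + (#(P i₀ \ T) + ∑ j, #(P (i₀.succAbove j) \ T)) := by
        rw [Fin.sum_univ_succAbove (fun i => #(P i \ T)) i₀]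
    _ ≤ 3 * #(replaceStarts a b s) + Pk (replace a b c s) k := by
        simp only [Function.comp_apply] at hkept
        omega

theorem Pk_succ_le_of_greedyStep {s u : List α} (hg : GreedyStep s u) (k : ℕ) :
    Pk s (k + 1) ≤ 3 * (s.length - u.length) + Pk u k := by
  obtain ⟨a, b, c, -, rfl⟩ := hg.1
  have hlen := length_replace_add_card_replaceStarts a b c s
  have hmax (Q) (hQ : IsPairPacking s Q) : #Q ≤ #(replaceStarts a b s) := by
    have := hg.card_add_length_le hQ
    omega
  rw [show s.length - (replace a b c s).length = #(replaceStarts a b s) by omega]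
  exact csSup_le' fun n ⟨P, hP, hn⟩ => hn ▸ sum_card_le_three_mul_add_Pk c hP hmax

/-- any run of BPE with `k` rounds has utility at least `P_k(s)/3`. -/
theorem stmt6 {α : Type*} [DecidableEq α] (s t : List α) (k : ℕ)
    (h : GreedyReach k s t) :
    Pk s k ≤ 3 * (s.length - t.length) := by
  induction k generalizing s with
  | zero => simp [Pk_zero]
  | succ k ih =>
    obtain ⟨u, hsu, hut⟩ := h
    have := Pk_succ_le_of_greedyStep hsu k
    have := ih u hut
    have := hsu.1.length_le
    have := hut.length_le
    omega
end

section
/- There exists a family of instances on which BPE achieves at most a 0.625 fraction of the optimal full-merge utility: for every t ≥ 1, letting s_t be the concatenation of t copies of the string 'abaacaaba#_j' (each #_j a distinct fresh separator symbol) followed by 'aa', any run of BPE with k = 4 merge rounds (regardless of tie-breaking) achieves utility at most 5t + 1, while OPT^m(s_t, 4) ≥ 8t. -/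
variable {α : Type*} [DecidableEq α]

/-- The string family: `t` copies of `abaacaaba |ⱼ aca #ⱼ` (with distinct
separator symbols), followed by `aa`.  Here `a = 0`, `b = 1`, `c = 2`,
and the separators are `3 + 2*j` and `4 + 2*j`. -/
def sUB (t : ℕ) : List ℕ :=
  (List.range t).flatMap
    (fun j => [0, 1, 0, 0, 2, 0, 0, 1, 0, 3 + 2 * j, 0, 2, 0, 4 + 2 * j]) ++ [0, 0]

/-! In `sUB t` the pair `00` occurs `2t + 1` times, while every other pair occurs at most `2t`
times, since each symbol other than `0` occurs at most twice per block. So the first BPE round must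
merge `00`, shortening the string by `2t + 1`. Afterwards every pair occurs at most once per block,
hence at most `t` times, and a full merge into a fresh symbol preserves this bound; each of the
three remaining rounds therefore gains at most `t`. Four well-chosen merges instead shorten each
block from 14 symbols to 6. -/

section AdjacentPairs

variable {β : Type*}

def adjPairs (s : List β) : List (β × β) := s.zip s.tail

@[simp] lemma adjPairs_nil : adjPairs ([] : List β) = [] := rfl

@[simp] lemma adjPairs_singleton (x : β) : adjPairs [x] = [] := rfl

@[simp] lemma adjPairs_cons_cons (x y : β) (r : List β) :
    adjPairs (x :: y :: r) = (x, y) :: adjPairs (y :: r) := rfl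

lemma adjPairs_sublist_adjPairs_cons (x : β) (s : List β) :
    (adjPairs s).Sublist (adjPairs (x :: s)) := by
  cases s <;> simp

lemma map_fst_adjPairs_sublist (s : List β) : ((adjPairs s).map Prod.fst).Sublist s := by
  induction s with
  | nil => simp
  | cons x s ih => cases s with
    | nil => simp
    | cons y r => simpa using ih.cons_cons x

lemma adjPairs_append_cons (L : List β) (m : β) (M : List β) :
    adjPairs (L ++ m :: M) = adjPairs (L ++ [m]) ++ adjPairs (m :: M) := by
  induction L with
  | nil => rfl
  | cons x L ih => cases L <;> simp_all

end AdjacentPairs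

lemma count_adjPairs_le_count_fst (s : List α) (a b : α) :
    (adjPairs s).count (a, b) ≤ s.count a :=
  calc (adjPairs s).count (a, b) ≤ ((adjPairs s).map Prod.fst).count a :=
        List.count_le_count_map (f := Prod.fst)
    _ ≤ s.count a := (map_fst_adjPairs_sublist s).count_le a

lemma count_adjPairs_le_count_snd (s : List α) (a b : α) :
    (adjPairs s).count (a, b) ≤ s.count b :=
  calc (adjPairs s).count (a, b) ≤ ((adjPairs s).map Prod.snd).count b :=
        List.count_le_count_map (f := Prod.snd)
    _ = s.tail.count b := by rw [adjPairs, List.map_snd_zip (by simp)]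
    _ ≤ s.count b := (List.tail_sublist s).count_le b

lemma count_adjPairs_cons_of_ne {u x : α} (h : u ≠ x) (y : α) (s : List α) :
    (adjPairs (u :: s)).count (x, y) = (adjPairs s).count (x, y) := by
  cases s <;> simp [h]

lemma count_adjPairs_flatMap_append_le {ι : Type*} (f : ι → List α) (p : α × α) (K : ℕ)
    {C : List α} (hC : C ≠ []) (l : List ι)
    (hf : ∀ j ∈ l, ∀ x, (adjPairs (f j ++ [x])).count p ≤ K) :
    (adjPairs (l.flatMap f ++ C)).count p ≤ K * l.length + (adjPairs C).count p := by
  induction l with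
  | nil => simp
  | cons j l ih =>
    obtain ⟨m, M, hmM⟩ := List.exists_cons_of_ne_nil (by simp [hC] :
      l.flatMap f ++ C ≠ [])
    have hj := hf j List.mem_cons_self m
    have hl := ih fun i hi => hf i (List.mem_cons_of_mem j hi)
    rw [List.flatMap_cons, List.append_assoc, hmM, adjPairs_append_cons, List.count_append]
    rw [hmM] at hl
    simp only [List.length_cons]
    linarith

section Replace

variable (a b c : α)

lemma length_le_length_replace_add (s : List α) :
    s.length ≤ (replace a b c s).length + (adjPairs s).count (a, b) := by
  fun_induction replace a b c s with
  | case1 | case2 => simp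
  | case3 x y r h ih =>
    have := (adjPairs_sublist_adjPairs_cons y r).count_le (a, b)
    simp only [List.length_cons, adjPairs_cons_cons, List.count_cons, h.1, h.2, beq_self_eq_true,
      if_true] at *
    omega
  | case4 x y r h ih =>
    have : (x, y) ≠ (a, b) := by simpa using h
    simp only [List.length_cons, adjPairs_cons_cons, List.count_cons, beq_iff_eq, this,
      if_false] at *
    omega

lemma count_replace_le (s : List α) :
    (replace a b c s).count c ≤ (adjPairs s).count (a, b) + s.count c := by
  fun_induction replace a b c s with
  | case1 | case2 => simp
  | case3 x y r h ih =>
    have := (adjPairs_sublist_adjPairs_cons y r).count_le (a, b)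
    simp only [List.count_cons, adjPairs_cons_cons, h.1, h.2, beq_self_eq_true, if_true] at *
    omega
  | case4 x y r h ih =>
    simp only [List.count_cons, adjPairs_cons_cons] at *
    omega

lemma exists_replace_cons_eq_cons_or (u : α) (s : List α) :
    ∃ M, replace a b c (u :: s) = u :: M ∨ replace a b c (u :: s) = c :: M := by
  cases s with
  | nil => exact ⟨[], Or.inl rfl⟩
  | cons v r =>
    by_cases h : u = a ∧ v = b
    · exact ⟨_, Or.inr (if_pos h)⟩
    · exact ⟨_, Or.inl (if_neg h)⟩

lemma count_adjPairs_replace_le {x y : α} (hx : x ≠ c) (hy : y ≠ c) (s : List α) :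
    (adjPairs (replace a b c s)).count (x, y) ≤ (adjPairs s).count (x, y) := by
  fun_induction replace a b c s with
  | case1 | case2 => simp
  | case3 u v r h ih =>
    calc (adjPairs (c :: replace a b c r)).count (x, y)
        = (adjPairs (replace a b c r)).count (x, y) :=
          count_adjPairs_cons_of_ne (Ne.symm hx) y _
      _ ≤ (adjPairs r).count (x, y) := ih
      _ ≤ (adjPairs (u :: v :: r)).count (x, y) :=
          ((adjPairs_sublist_adjPairs_cons v r).trans
            (adjPairs_sublist_adjPairs_cons u _)).count_le _
  | case4 u v r h ih =>
    obtain ⟨M, hM | hM⟩ := exists_replace_cons_eq_cons_or a b c v r <;> rw [hM] at ih ⊢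
    · simp only [adjPairs_cons_cons, List.count_cons] at *
      omega
    · have : (u, c) ≠ (x, y) := by simp [Ne.symm hy]
      simp only [adjPairs_cons_cons, List.count_cons, beq_iff_eq, this, if_false] at *
      omega

/-- Pairs avoiding the fresh symbol `c` come from pairs of `s`; pairs containing `c` are at most
as many as the occurrences of `c`, i.e. as the merged occurrences of `ab`. -/
lemma count_adjPairs_replace_le_of_forall {s : List α} {N : ℕ} (hc : c ∉ s)
    (hs : ∀ p, (adjPairs s).count p ≤ N) (p : α × α) :
    (adjPairs (replace a b c s)).count p ≤ N := by
  obtain ⟨x, y⟩ := p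
  have hmerged : (replace a b c s).count c ≤ N :=
    calc (replace a b c s).count c ≤ (adjPairs s).count (a, b) + s.count c :=
          count_replace_le a b c s
      _ ≤ N := by rw [List.count_eq_zero.mpr hc]; exact hs _
  by_cases hx : x = c
  · subst hx; exact (count_adjPairs_le_count_fst _ _ _).trans hmerged
  by_cases hy : y = c
  · subst hy; exact (count_adjPairs_le_count_snd _ _ _).trans hmerged
  exact (count_adjPairs_replace_le a b c hx hy s).trans (hs _)

lemma replace_append {L : List α} (hL : L.getLast? ≠ some a) (M : List α) :
    replace a b c (L ++ M) = replace a b c L ++ replace a b c M := by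
  fun_induction replace a b c L with
  | case1 => rfl
  | case2 x =>
    have hx : x ≠ a := by simpa using hL
    cases M with
    | nil => rfl
    | cons m M => exact if_neg fun h => hx h.1
  | case3 x y r h ih =>
    have hr : r.getLast? ≠ some a := fun hr => hL (by simp [List.getLast?_cons, hr])
    simp only [List.cons_append, replace, if_pos h, ih hr]
  | case4 x y r h ih =>
    have hyr : (y :: r).getLast? ≠ some a := by simpa using hL
    simp only [List.cons_append, replace, if_neg h] at ih ⊢
    rw [ih hyr]

lemma replace_flatMap_append {ι : Type*} (f : ι → List α) (C : List α) (l : List ι)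
    (hf : ∀ j ∈ l, (f j).getLast? ≠ some a) :
    replace a b c (l.flatMap f ++ C) =
      l.flatMap (fun j => replace a b c (f j)) ++ replace a b c C := by
  induction l with
  | nil => rfl
  | cons j l ih =>
    rw [List.flatMap_cons, List.append_assoc, replace_append a b c (hf j List.mem_cons_self),
      ih fun i hi => hf i (List.mem_cons_of_mem j hi), List.flatMap_cons, List.append_assoc]

end Replace

section MergeSequences

variable {s u : List α} {N : ℕ}

lemma FullStep.length_le_add (h : FullStep s u) (hs : ∀ p, (adjPairs s).count p ≤ N) :
    s.length ≤ u.length + N ∧ ∀ p, (adjPairs u).count p ≤ N := by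
  obtain ⟨a, b, c, hc, rfl⟩ := h
  exact ⟨(length_le_length_replace_add a b c s).trans (Nat.add_le_add_left (hs _) _),
    count_adjPairs_replace_le_of_forall a b c hc hs⟩

lemma FullReach.length_le_add_mul {k : ℕ} (h : FullReach k s u)
    (hs : ∀ p, (adjPairs s).count p ≤ N) : s.length ≤ u.length + k * N := by
  induction k generalizing s with
  | zero => exact (congrArg List.length h).ge.trans (Nat.le_add_right _ _)
  | succ k ih =>
    obtain ⟨v, hsv, hvu⟩ := h
    obtain ⟨hlen, hv⟩ := hsv.length_le_add hs
    have := ih hvu hv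
    rw [Nat.succ_mul]
    omega

lemma GreedyReach.fullReach {k : ℕ} (h : GreedyReach k s u) : FullReach k s u := by
  induction k generalizing s with
  | zero => exact h
  | succ k ih =>
    obtain ⟨v, hsv, hvu⟩ := h
    exact ⟨v, hsv.1, ih hvu⟩

lemma FullReach.length_sub_le_OPTm {k : ℕ} (h : FullReach k s u) :
    s.length - u.length ≤ OPTm s k :=
  le_csSup ⟨s.length, by rintro _ ⟨v, -, rfl⟩; exact Nat.sub_le _ _⟩ ⟨u, h, rfl⟩

lemma fullStep_flatMap_append {ι : Type*} {a b c : α} {f g : ι → List α} {C C' : List α}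
    {l : List ι} (hcf : ∀ j ∈ l, c ∉ f j) (hcC : c ∉ C)
    (hf : ∀ j ∈ l, (f j).getLast? ≠ some a)
    (hg : ∀ j ∈ l, replace a b c (f j) = g j) (hC : replace a b c C = C') :
    FullStep (l.flatMap f ++ C) (l.flatMap g ++ C') := by
  refine ⟨a, b, c, ?_, ?_⟩
  · simp only [List.mem_append, List.mem_flatMap, not_or, not_exists, not_and]
    exact ⟨hcf, hcC⟩
  · rw [replace_flatMap_append a b c f C l hf, List.flatMap_congr hg, hC]

end MergeSequences

lemma length_sUB (t : ℕ) : (sUB t).length = 14 * t + 2 := by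
  simp [sUB, mul_comm]

lemma lt_of_mem_sUB {t x : ℕ} (h : x ∈ sUB t) : x < 2 * t + 3 := by
  simp only [sUB, List.mem_append, List.mem_flatMap, List.mem_range, List.mem_cons,
    List.not_mem_nil, or_false] at h
  obtain ⟨j, hj, hx⟩ | hx := h <;> omega

lemma count_sUB_le {x : ℕ} (hx : x ≠ 0) (t : ℕ) : (sUB t).count x ≤ 2 * t := by
  simp only [sUB, List.count_append, List.count_flatMap]
  have hblock : ∀ n ∈ (List.range t).map (List.count x ∘ fun j =>
      [0, 1, 0, 0, 2, 0, 0, 1, 0, 3 + 2 * j, 0, 2, 0, 4 + 2 * j]), n ≤ 2 := by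
    intro n hn
    obtain ⟨j, -, rfl⟩ := List.mem_map.1 hn
    simp only [Function.comp_apply, List.count_cons, List.count_nil, beq_iff_eq, Ne.symm hx,
      if_false]
    split_ifs <;> omega
  have h00 : [0, 0].count x = 0 := by simp [Ne.symm hx]
  rw [h00, add_zero, mul_comm]
  simpa using List.sum_le_card_nsmul _ 2 hblock

lemma count_adjPairs_sUB_le {a b : ℕ} (hab : (a, b) ≠ (0, 0)) (t : ℕ) :
    (adjPairs (sUB t)).count (a, b) ≤ 2 * t := by
  by_cases ha : a = 0
  · have hb : b ≠ 0 := by rintro rfl; exact hab (by rw [ha])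
    exact (count_adjPairs_le_count_snd _ _ _).trans (count_sUB_le hb t)
  · exact (count_adjPairs_le_count_fst _ _ _).trans (count_sUB_le ha t)

lemma replace_sUB (t c : ℕ) : replace 0 0 c (sUB t) =
    (List.range t).flatMap
      (fun j => [0, 1, c, 2, c, 1, 0, 3 + 2 * j, 0, 2, 0, 4 + 2 * j]) ++ [c] := by
  rw [sUB, replace_flatMap_append _ _ _ _ _ _ (by simp)]
  simp (disch := omega) [replace]

lemma length_replace_sUB (t c : ℕ) : (replace 0 0 c (sUB t)).length = 12 * t + 1 := by
  simp [replace_sUB, mul_comm]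

lemma count_adjPairs_replace_sUB_le {t c : ℕ} (hc : c ∉ sUB t) (p : ℕ × ℕ) :
    (adjPairs (replace 0 0 c (sUB t))).count p ≤ t := by
  rw [replace_sUB]
  refine (count_adjPairs_flatMap_append_le _ p 1 (List.cons_ne_nil c []) _ ?_).trans (by simp)
  intro j hj x
  have hcj : c ∉ [0, 1, 0, 0, 2, 0, 0, 1, 0, 3 + 2 * j, 0, 2, 0, 4 + 2 * j] :=
    fun h => hc (List.mem_append_left _ (List.mem_flatMap.2 ⟨j, hj, h⟩))
  simp only [List.mem_cons, List.not_mem_nil, or_false, not_or] at hcj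
  obtain ⟨hc0, hc1, -, -, hc2, -, -, -, -, hcs, -, -, -, hcs'⟩ := hcj
  refine List.nodup_iff_count_le_one.1 ?_ p
  simp only [List.cons_append, List.nil_append, adjPairs_cons_cons, adjPairs_singleton,
    List.nodup_cons, List.mem_cons, Prod.mk.injEq, List.not_mem_nil, List.nodup_nil, hc0, hc1, hc2,
    hcs, hcs', Ne.symm hc0, Ne.symm hc1, Ne.symm hc2, zero_ne_one, one_ne_zero, OfNat.one_ne_ofNat,
    OfNat.zero_ne_ofNat, OfNat.ofNat_ne_one, OfNat.ofNat_ne_zero, true_and,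
    and_true, false_and, and_false, false_or, or_false, not_or, not_and, not_false_eq_true]
  omega

lemma greedyStep_sUB {t : ℕ} {u : List ℕ} (h : GreedyStep (sUB t) u) :
    ∃ c ∉ sUB t, u = replace 0 0 c (sUB t) := by
  obtain ⟨⟨a, b, c, hc, rfl⟩, hmin⟩ := h
  refine ⟨c, hc, ?_⟩
  suffices hab : (a, b) = (0, 0) by obtain ⟨rfl, rfl⟩ := Prod.mk.inj hab; rfl
  by_contra hab
  have hfresh : 2 * t + 3 ∉ sUB t := fun h => (lt_of_mem_sUB h).false
  have hle := hmin _ ⟨0, 0, 2 * t + 3, hfresh, rfl⟩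
  have := length_le_length_replace_add a b c (sUB t)
  have := count_adjPairs_sUB_le hab t
  rw [length_sUB, length_replace_sUB] at *
  omega

/-- With `a, b, c = 0, 1, 2`, the merges `ac ↦ X`, `Xa ↦ Y`, `ab ↦ Z`, `Za ↦ T` into the fresh
symbols `X, Y, Z, T = 2t+3, …, 2t+6` turn every block `abaacaaba s aca s'` into `TYT s Y s'`. -/
lemma exists_fullReach_sUB (t : ℕ) :
    ∃ u, FullReach 4 (sUB t) u ∧ u.length = 6 * t + 2 := by
  refine ⟨_, ⟨(List.range t).flatMap
      (fun j => [0, 1, 0, 2 * t + 3, 0, 0, 1, 0, 3 + 2 * j, 2 * t + 3, 0, 4 + 2 * j]) ++ [0, 0],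
    fullStep_flatMap_append (a := 0) (b := 2) (c := 2 * t + 3) ?_ ?_ ?_ ?_ ?_,
    (List.range t).flatMap
      (fun j => [0, 1, 0, 2 * t + 4, 0, 1, 0, 3 + 2 * j, 2 * t + 4, 4 + 2 * j]) ++ [0, 0],
    fullStep_flatMap_append (a := 2 * t + 3) (b := 0) (c := 2 * t + 4) ?_ ?_ ?_ ?_ ?_,
    (List.range t).flatMap
      (fun j => [2 * t + 5, 0, 2 * t + 4, 2 * t + 5, 0, 3 + 2 * j, 2 * t + 4, 4 + 2 * j]) ++ [0, 0],
    fullStep_flatMap_append (a := 0) (b := 1) (c := 2 * t + 5) ?_ ?_ ?_ ?_ ?_,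
    (List.range t).flatMap
      (fun j => [2 * t + 6, 2 * t + 4, 2 * t + 6, 3 + 2 * j, 2 * t + 4, 4 + 2 * j]) ++ [0, 0],
    fullStep_flatMap_append (a := 2 * t + 5) (b := 0) (c := 2 * t + 6) ?_ ?_ ?_ ?_ ?_, rfl⟩, ?_⟩
  all_goals first
    | simp [replace, mul_comm]; done
    | intro j _; simp (disch := omega) [replace, if_neg]; done
    | intro j hj
      simp only [List.mem_range, List.mem_cons, List.not_mem_nil, or_false,
        List.getLast?_cons_cons, List.getLast?_singleton, ne_eq, Option.some.injEq] at hj ⊢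
      omega

theorem stmt8_general (t : ℕ) :
    (∀ t' : List ℕ, GreedyReach 4 (sUB t) t' → (sUB t).length - t'.length ≤ 5 * t + 1) ∧
    8 * t ≤ OPTm (sUB t) 4 := by
  refine ⟨fun t' h => ?_, ?_⟩
  · obtain ⟨u, hu, hut'⟩ := h
    obtain ⟨c, hc, rfl⟩ := greedyStep_sUB hu
    have hreach : FullReach 3 (replace 0 0 c (sUB t)) t' := hut'.fullReach
    have := hreach.length_le_add_mul (count_adjPairs_replace_sUB_le hc)
    rw [length_replace_sUB] at this
    rw [length_sUB]
    omega
  · obtain ⟨u, hu, hlen⟩ := exists_fullReach_sUB t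
    have := hu.length_sub_le_OPTm
    rw [length_sUB, hlen] at this
    omega

/-- on this family, every run of BPE with `k = 4` rounds achieves
utility at most `5t + 1`, while `OPT^m(s_t, 4) ≥ 8t`. -/
theorem stmt8 (t : ℕ) (ht : 1 ≤ t) :
    (∀ t' : List ℕ, GreedyReach 4 (sUB t) t' → (sUB t).length - t'.length ≤ 5 * t + 1) ∧
    8 * t ≤ OPTm (sUB t) 4 :=
  stmt8_general t
end

section
/- The EvenOdd algorithm is a 0.5-approximation for optimal pair encoding: for every string s and every k, there is a polynomial-time computable partial merge sequence of length k with utility at least F_k(s)/2 ≥ OPT(s,k)/2, where F_k(s) is the total number of occurrences of the k most frequent two-symbol pairs in s. -/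
variable {α : Type*} [DecidableEq α]

/-!
Write `pairs s` for the list of adjacent pairs of `s`, so that `Fk s k` is the largest number of
entries of `pairs s` lying in a set of at most `k` pairs.

Upper bound: if `s = expand a b c u`, the adjacent pairs of `s` are those of `u`, each moved by
`boundaryPair`, together with one copy of `(a, b)` per occurrence of `c` in `u`. Hence a set of
`k` pairs realising `Fk u k` yields a set of `k + 1` pairs for `s` which also covers the
`u.count c` letters saved by the merge, and induction bounds the saving of `k` merges by `Fk s k`.

Lower bound: for a set `Q` of at most `k` pairs realising `Fk s k`, cut `s` greedily from the
left into letters and blocks `xy` with `(x, y) ∈ Q`. A block accounts for at most two occurrences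
of pairs of `Q` (its own and the one starting at its second letter), so there are at least
`Fk s k / 2` blocks. Merging the blocks of each pair of `Q` in turn into a fresh letter takes at
most `k` partial merges and saves one letter per block.
-/

section Pairs

variable {β : Type*}

def pairs : List β → List (β × β)
  | [] => []
  | [_] => []
  | x :: y :: r => (x, y) :: pairs (y :: r)

@[simp] lemma pairs_nil : pairs ([] : List β) = [] := rfl

@[simp] lemma pairs_singleton (x : β) : pairs [x] = [] := rfl

@[simp] lemma pairs_cons_cons (x y : β) (r : List β) :
    pairs (x :: y :: r) = (x, y) :: pairs (y :: r) := rfl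

lemma countP_pairs_cons_le (p : β × β → Bool) (x : β) (l : List β) :
    (pairs (x :: l)).countP p ≤ (pairs l).countP p + 1 := by
  cases l with
  | nil => simp
  | cons y r =>
    rw [pairs_cons_cons, List.countP_cons]
    split <;> omega

end Pairs

lemma freq_cons (x : α) (l : List α) (a b : α) :
    freq (x :: l) a b = (if x = a ∧ l.head? = some b then 1 else 0) + freq l a b := by
  simp only [freq, Finset.card_filter, List.length_cons, Finset.sum_range_succ',
    List.getElem?_cons_succ, List.getElem?_cons_zero, Option.some.injEq,
    List.head?_eq_getElem?]
  omega

lemma freq_eq_count_pairs (s : List α) (a b : α) : freq s a b = (pairs s).count (a, b) := by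
  induction s using pairs.induct with
  | case1 => simp [freq]
  | case2 x => simp [freq]
  | case3 x y r ih =>
    rw [freq_cons, ih, pairs_cons_cons, List.count_cons]
    simp [add_comm]

lemma sum_freq_eq_countP_pairs (s : List α) (Q : Finset (α × α)) :
    ∑ p ∈ Q, freq s p.1 p.2 = (pairs s).countP (fun p => p ∈ Q) := by
  set l := (pairs s).filter (fun p => p ∈ Q)
  calc ∑ p ∈ Q, freq s p.1 p.2 = ∑ p ∈ Q, Multiset.count p (l : Multiset (α × α)) := by
        refine Finset.sum_congr rfl fun p hp => ?_
        simp only [freq_eq_count_pairs, Multiset.coe_count, List.count_eq_countP, l,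
          List.countP_filter]
        grind
    _ = l.length := Multiset.sum_count_eq_card (by simp [l])
    _ = (pairs s).countP (fun p => p ∈ Q) := (List.countP_eq_length_filter ..).symm

lemma bddAbove_sum_freq (s : List α) (k : ℕ) :
    BddAbove {n | ∃ Q : Finset (α × α), Q.card ≤ k ∧ n = ∑ p ∈ Q, freq s p.1 p.2} :=
  ⟨(pairs s).length, by
    rintro n ⟨Q, -, rfl⟩
    rw [sum_freq_eq_countP_pairs]
    exact List.countP_le_length⟩

lemma countP_pairs_le_Fk (s : List α) {k : ℕ} {Q : Finset (α × α)} (hQ : Q.card ≤ k) :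
    (pairs s).countP (fun p => p ∈ Q) ≤ Fk s k := by
  rw [← sum_freq_eq_countP_pairs]
  exact le_csSup (bddAbove_sum_freq s k) ⟨Q, hQ, rfl⟩

lemma exists_countP_pairs_eq_Fk (s : List α) (k : ℕ) :
    ∃ Q : Finset (α × α), Q.card ≤ k ∧ (pairs s).countP (fun p => p ∈ Q) = Fk s k := by
  obtain ⟨Q, hQ, h⟩ : Fk s k ∈ _ := Nat.sSup_mem ⟨0, ∅, by simp⟩ (bddAbove_sum_freq s k)
  exact ⟨Q, hQ, by rw [← sum_freq_eq_countP_pairs, h]⟩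

lemma expand_nil (a b c : α) : expand a b c [] = [] := rfl

lemma expand_cons (a b c x : α) (l : List α) :
    expand a b c (x :: l) = (if x = c then [a, b] else [x]) ++ expand a b c l := by
  rw [expand]; split <;> rfl

lemma expand_of_not_mem (a b : α) {c : α} {l : List α} (h : c ∉ l) : expand a b c l = l := by
  induction l with
  | nil => rfl
  | cons x l ih =>
    rw [List.mem_cons, not_or] at h
    rw [expand_cons, if_neg (Ne.symm h.1), ih h.2, List.singleton_append]

lemma length_expand_s11 (a b c : α) (l : List α) :
    (expand a b c l).length = l.length + l.count c := by
  induction l with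
  | nil => rfl
  | cons x l ih =>
    rw [expand_cons, List.length_append, ih, List.count_cons]
    by_cases hx : x = c <;> simp [hx] <;> omega

/-- The pair across the boundary between the expansions of `p.1` and `p.2`. -/
def boundaryPair (a b c : α) (p : α × α) : α × α :=
  (if p.1 = c then b else p.1, if p.2 = c then a else p.2)

lemma pairs_expand_perm (a b c : α) (u : List α) :
    (pairs (expand a b c u)).Perm
      (List.replicate (u.count c) (a, b) ++ (pairs u).map (boundaryPair a b c)) := by
  induction u using pairs.induct with
  | case1 => simp [expand_nil]
  | case2 x => by_cases hx : x = c <;> simp [expand_cons, expand_nil, hx]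
  | case3 x y r ih =>
    obtain ⟨w, hw⟩ : ∃ w, expand a b c (y :: r) = (if y = c then a else y) :: w := by
      rw [expand_cons]; split_ifs <;> exact ⟨_, rfl⟩
    have hpairs : pairs (expand a b c (x :: y :: r)) =
        (if x = c then [(a, b)] else []) ++
          boundaryPair a b c (x, y) :: pairs (expand a b c (y :: r)) := by
      rw [expand_cons, hw]; by_cases hx : x = c <;> simp [hx, boundaryPair]
    rw [hpairs, pairs_cons_cons, List.map_cons, List.count_cons]
    refine ((ih.cons _).append_left _).trans ?_
    by_cases hx : x = c
    · simp only [hx, if_true, beq_self_eq_true, List.replicate_succ', List.append_assoc,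
        List.cons_append]
      exact (List.perm_middle.trans (List.perm_middle.cons _)).symm
    · simpa [hx] using List.perm_middle.symm

lemma count_add_Fk_le_Fk_expand (a b c : α) (u : List α) (k : ℕ) :
    u.count c + Fk u k ≤ Fk (expand a b c u) (k + 1) := by
  obtain ⟨Q', hQ'k, hQ'⟩ := exists_countP_pairs_eq_Fk u k
  let Q := insert (a, b) (Q'.image (boundaryPair a b c))
  have hQk : Q.card ≤ k + 1 :=
    (Finset.card_insert_le _ _).trans (Nat.add_le_add_right (Finset.card_image_le.trans hQ'k) 1)
  have hmono : (pairs u).countP (fun p => p ∈ Q') ≤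
      (pairs u).countP (fun p => boundaryPair a b c p ∈ Q) :=
    List.countP_mono_left fun p _ hp => decide_eq_true <|
      Finset.mem_insert_of_mem (Finset.mem_image_of_mem _ (of_decide_eq_true hp))
  calc u.count c + Fk u k
      ≤ u.count c + (pairs u).countP (fun p => boundaryPair a b c p ∈ Q) := by omega
    _ = (pairs (expand a b c u)).countP (fun p => p ∈ Q) := by
      rw [(pairs_expand_perm a b c u).countP_eq, List.countP_append, List.countP_replicate,
        List.countP_map]
      simp [Q, Function.comp_def]
    _ ≤ Fk (expand a b c u) (k + 1) := countP_pairs_le_Fk _ hQk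

lemma length_le_add_Fk_of_partialReach {k : ℕ} {s t : List α} (h : PartialReach k s t) :
    s.length ≤ t.length + Fk s k := by
  induction k generalizing s with
  | zero => rw [h]; exact Nat.le_add_right _ _
  | succ k ih =>
    obtain ⟨u, ⟨a, b, c, rfl⟩, hu⟩ := h
    have := count_add_Fk_le_Fk_expand a b c u k
    rw [length_expand_s11]
    linarith [ih hu]

lemma OPT_le_Fk (s : List α) (k : ℕ) : OPT s k ≤ Fk s k :=
  csSup_le' fun _ ⟨_, ht, hn⟩ =>
    hn ▸ Nat.sub_le_iff_le_add'.2 (length_le_add_Fk_of_partialReach ht)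

section Segmentation

variable {β : Type*}

def joinBlocks (cs : List (β ⊕ β × β)) : List β :=
  cs.flatMap (Sum.elim (fun x => [x]) (fun p => [p.1, p.2]))

@[simp] lemma joinBlocks_nil : joinBlocks ([] : List (β ⊕ β × β)) = [] := rfl

@[simp] lemma joinBlocks_cons_inl (x : β) (cs : List (β ⊕ β × β)) :
    joinBlocks (.inl x :: cs) = x :: joinBlocks cs := rfl

@[simp] lemma joinBlocks_cons_inr (p : β × β) (cs : List (β ⊕ β × β)) :
    joinBlocks (.inr p :: cs) = p.1 :: p.2 :: joinBlocks cs := rfl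

lemma length_joinBlocks (cs : List (β ⊕ β × β)) :
    (joinBlocks cs).length = cs.length + cs.countP Sum.isRight := by
  induction cs with
  | nil => rfl
  | cons z cs ih => cases z <;> simp [ih, List.countP_cons] <;> omega

end Segmentation

def greedyBlocks (Q : Finset (α × α)) : List α → List (α ⊕ α × α)
  | [] => []
  | [x] => [.inl x]
  | x :: y :: r =>
    if (x, y) ∈ Q then .inr (x, y) :: greedyBlocks Q r else .inl x :: greedyBlocks Q (y :: r)

lemma joinBlocks_greedyBlocks (Q : Finset (α × α)) (s : List α) :
    joinBlocks (greedyBlocks Q s) = s := by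
  induction s using greedyBlocks.induct Q <;> simp_all [greedyBlocks]

lemma mem_of_inr_mem_greedyBlocks {Q : Finset (α × α)} {s : List α} {p : α × α}
    (h : Sum.inr p ∈ greedyBlocks Q s) : p ∈ Q := by
  induction s using greedyBlocks.induct Q with
  | case1 => simp [greedyBlocks] at h
  | case2 x => simp [greedyBlocks] at h
  | case3 x y r hxy ih =>
    rw [greedyBlocks, if_pos hxy, List.mem_cons, Sum.inr.injEq] at h
    exact h.elim (· ▸ hxy) ih
  | case4 x y r hxy ih =>
    rw [greedyBlocks, if_neg hxy, List.mem_cons] at h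
    exact ih (h.resolve_left Sum.inr_ne_inl)

lemma countP_pairs_le_two_mul_countP_greedyBlocks (Q : Finset (α × α)) (s : List α) :
    (pairs s).countP (fun p => p ∈ Q) ≤ 2 * (greedyBlocks Q s).countP Sum.isRight := by
  induction s using greedyBlocks.induct Q with
  | case1 => simp
  | case2 => simp
  | case3 x y r hxy ih =>
    have := countP_pairs_cons_le (fun p => p ∈ Q) y r
    simp [greedyBlocks, hxy, List.countP_cons]
    omega
  | case4 x y r hxy ih => simpa [greedyBlocks, hxy] using ih

lemma expand_joinBlocks_map (a b c : α) {cs : List (α ⊕ α × α)} (hc : c ∉ joinBlocks cs) :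
    expand a b c (joinBlocks (cs.map fun z => if z = .inr (a, b) then .inl c else z)) =
      joinBlocks cs := by
  induction cs with
  | nil => rfl
  | cons z cs ih =>
    cases z with
    | inl x =>
      simp only [joinBlocks_cons_inl, List.mem_cons, not_or] at hc
      simp [expand_cons, Ne.symm hc.1, ih hc.2]
    | inr p =>
      simp only [joinBlocks_cons_inr, List.mem_cons, not_or] at hc
      by_cases hp : p = (a, b)
      · simp [hp, expand_cons, ih hc.2.2]
      · simp [hp, expand_cons, Ne.symm hc.1, Ne.symm hc.2.1, ih hc.2.2]

lemma exists_partialReach_joinBlocks [Infinite α] (qs : List (α × α))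
    (cs : List (α ⊕ α × α)) (h : ∀ p, Sum.inr p ∈ cs → p ∈ qs) :
    ∃ t, PartialReach qs.length (joinBlocks cs) t ∧ t.length = cs.length := by
  induction qs generalizing cs with
  | nil =>
    have hcs : cs.countP Sum.isRight = 0 := List.countP_eq_zero.2 fun z hz => by
      cases z <;> simp_all
    exact ⟨_, rfl, by rw [length_joinBlocks, hcs, add_zero]⟩
  | cons q qs ih =>
    obtain ⟨c, hc⟩ := Infinite.exists_notMem_finset (joinBlocks cs).toFinset
    let cs' := cs.map fun z => if z = .inr q then .inl c else z
    have h' : ∀ p, Sum.inr p ∈ cs' → p ∈ qs := by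
      intro p hp
      obtain ⟨z, hz, hzp⟩ := List.mem_map.1 hp
      split_ifs at hzp with hzq
      subst hzp
      exact (List.mem_cons.1 (h p hz)).resolve_left (by rintro rfl; exact hzq rfl)
    obtain ⟨t, ht, hlen⟩ := ih cs' h'
    exact ⟨t, ⟨_, ⟨q.1, q.2, c, expand_joinBlocks_map _ _ _ (by simpa using hc)⟩, ht⟩,
      by rw [hlen, List.length_map]⟩

lemma partialStep_refl [Infinite α] (s : List α) : PartialStep s s := by
  obtain ⟨c, hc⟩ := Infinite.exists_notMem_finset s.toFinset
  exact ⟨c, c, c, expand_of_not_mem c c (by simpa using hc)⟩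

lemma PartialReach.mono [Infinite α] {m k : ℕ} {s t : List α} (hmk : m ≤ k)
    (h : PartialReach m s t) : PartialReach k s t :=
  Nat.le_induction h (fun _ _ ih => ⟨s, partialStep_refl s, ih⟩) k hmk

/-- EvenOdd is a `0.5`-approximation for OPE: there is a partial
merge sequence of length `k` with utility at least `F_k(s)/2 ≥ OPT(s,k)/2`. -/
theorem stmt11 {α : Type*} [DecidableEq α] [Infinite α] (s : List α) (k : ℕ) :
    ∃ t : List α, PartialReach k s t ∧
      Fk s k ≤ 2 * (s.length - t.length) ∧ OPT s k ≤ Fk s k := by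
  obtain ⟨Q, hQk, hQ⟩ := exists_countP_pairs_eq_Fk s k
  obtain ⟨t, ht, hlen⟩ := exists_partialReach_joinBlocks Q.toList (greedyBlocks Q s)
    fun p hp => Finset.mem_toList.2 (mem_of_inr_mem_greedyBlocks hp)
  rw [joinBlocks_greedyBlocks] at ht
  refine ⟨t, ht.mono (by rwa [Finset.length_toList]), ?_, OPT_le_Fk s k⟩
  have hs := length_joinBlocks (greedyBlocks Q s)
  rw [joinBlocks_greedyBlocks] at hs
  have := countP_pairs_le_two_mul_countP_greedyBlocks Q s
  omega
end
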